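/- arXiv:2507.20183 — 4 statements merged into one kernel-verified Lean document; each statement's English description precedes it below -/
import Mathlib

section
/- Let $\{a_k\}_{k\ge 1}$ be a nonnegative real sequence, $\{\beta_j\}_{j\ge 1}$ a nonnegative real sequence, and $c \ge 0$. If $a_k^2 \le c^2 + \sum_{j=1}^{k} \beta_j a_j$ for all $k \ge 1$, then $a_k \le c + \sum_{j=1}^{k} \beta_j$ for all $k \ge 1$. -/
/-! Let `m = a j₀` be the largest of `a 1, …, a k`. The hypothesis at `j₀` gives
`m ^ 2 ≤ c ^ 2 + m * ∑ β`, and the larger root of `x ^ 2 - x * B - c ^ 2` is at most `c + B`. -/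

theorem le_add_of_sq_le_sq_add_mul {R : Type*} [Field R] [LinearOrder R] [IsStrictOrderedRing R]
    {m c B : R} (hc : 0 ≤ c) (hB : 0 ≤ B) (h : m ^ 2 ≤ c ^ 2 + m * B) : m ≤ c + B := by
  nlinarith

theorem Finset.sum_mul_le_mul_sum_of_subset {ι R : Type*} [CommSemiring R] [PartialOrder R]
    [IsOrderedRing R] {s t : Finset ι} {a β : ι → R} {m : R} (hts : t ⊆ s)
    (hβ : ∀ i ∈ s, 0 ≤ β i) (ha : ∀ i ∈ t, a i ≤ m) (hm : 0 ≤ m) :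
    ∑ i ∈ t, β i * a i ≤ m * ∑ i ∈ s, β i :=
  calc ∑ i ∈ t, β i * a i
      ≤ ∑ i ∈ t, m * β i :=
        sum_le_sum fun i hi => by
          rw [mul_comm m]; exact mul_le_mul_of_nonneg_left (ha i hi) (hβ i (hts hi))
    _ ≤ ∑ i ∈ s, m * β i :=
        sum_le_sum_of_subset_of_nonneg hts fun i hi _ => mul_nonneg hm (hβ i hi)
    _ = m * ∑ i ∈ s, β i := (mul_sum s β m).symm

theorem stmt_0_general (a β : ℕ → ℝ) (c : ℝ)
    (hβ : ∀ j, 0 ≤ β j) (hc : 0 ≤ c)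
    (h : ∀ k ≥ 1, (a k) ^ 2 ≤ c ^ 2 + ∑ j ∈ Finset.Icc 1 k, β j * a j) :
    ∀ k ≥ 1, a k ≤ c + ∑ j ∈ Finset.Icc 1 k, β j := by
  intro k hk
  obtain ⟨j₀, hj₀, hmax⟩ :=
    Finset.exists_max_image (Finset.Icc 1 k) a ⟨k, Finset.mem_Icc.mpr ⟨hk, le_rfl⟩⟩
  have hak : a k ≤ a j₀ := hmax k (Finset.mem_Icc.mpr ⟨hk, le_rfl⟩)
  have hB : 0 ≤ ∑ j ∈ Finset.Icc 1 k, β j := Finset.sum_nonneg fun j _ => hβ j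
  rcases le_or_gt (a j₀) c with hle | hlt
  · linarith
  obtain ⟨hj₀1, hj₀k⟩ := Finset.mem_Icc.mp hj₀
  have hsub : Finset.Icc 1 j₀ ⊆ Finset.Icc 1 k := Finset.Icc_subset_Icc_right hj₀k
  have hsum : ∑ j ∈ Finset.Icc 1 j₀, β j * a j ≤ a j₀ * ∑ j ∈ Finset.Icc 1 k, β j :=
    Finset.sum_mul_le_mul_sum_of_subset hsub (fun j _ => hβ j)
      (fun j hj => hmax j (hsub hj)) (hc.trans hlt.le)
  exact hak.trans (le_add_of_sq_le_sq_add_mul hc hB ((h j₀ hj₀1).trans (by linarith)))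

theorem stmt_0 (a β : ℕ → ℝ) (c : ℝ)
    (ha : ∀ k, 0 ≤ a k) (hβ : ∀ j, 0 ≤ β j) (hc : 0 ≤ c)
    (h : ∀ k ≥ 1, (a k) ^ 2 ≤ c ^ 2 + ∑ j ∈ Finset.Icc 1 k, β j * a j) :
    ∀ k ≥ 1, a k ≤ c + ∑ j ∈ Finset.Icc 1 k, β j :=
  stmt_0_general a β c hβ hc h
end

section
/- Let $C \subseteq \mathbb{R}^n$ be a nonempty closed convex set, let $a > 0$ and $v \in \mathbb{R}^n$ be fixed. Then the equation $-a(\xi + v) = \mathrm{proj}_{C+\xi}(0)$ has the unique solution $\xi = -\left(\frac{1}{1+a}\mathrm{proj}_C(v) + \frac{a}{1+a} v\right)$, where $\mathrm{proj}_C(x)$ denotes the metric projection of $x$ onto $C$ and $C + \xi = \{c + \xi : c \in C\}$. -/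
open scoped RealInnerProductSpace

/-!
Write `c := -a (ξ + v) - ξ`. Translating, the equation says that `c` is the projection of `-ξ`
onto `C`. Since `-ξ - c = a (ξ + v)` and `v - c = (1 + a) (ξ + v)` point in the same direction,
the variational inequality `⟪x - c, y - c⟫ ≤ 0` (for all `y ∈ C`) holds for `x = -ξ` exactly when
it holds for `x = v`; so the equation says `c = proj_C v`, which is linear in `ξ`.
-/

/-- `p` is the metric projection of `x` onto `C`. -/
def IsProjOn {n : ℕ} (C : Set (EuclideanSpace ℝ (Fin n)))
    (x p : EuclideanSpace ℝ (Fin n)) : Prop :=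
  p ∈ C ∧ ∀ y ∈ C, dist x p ≤ dist x y

theorem forall_dist_le_iff_real_inner_le_zero {F : Type*} [NormedAddCommGroup F]
    [InnerProductSpace ℝ F] {K : Set F} (hK : Convex ℝ K) {x p : F} (hp : p ∈ K) :
    (∀ y ∈ K, dist x p ≤ dist x y) ↔ ∀ y ∈ K, ⟪x - p, y - p⟫ ≤ 0 := by
  have : Nonempty K := ⟨⟨p, hp⟩⟩
  have hbdd : BddBelow (Set.range fun w : K => ‖x - w‖) :=
    ⟨0, by rintro _ ⟨w, rfl⟩; exact norm_nonneg _⟩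
  rw [← norm_eq_iInf_iff_real_inner_le_zero hK hp]
  simp only [dist_eq_norm]
  refine ⟨fun h => le_antisymm (le_ciInf fun w => h w w.2) (ciInf_le hbdd ⟨p, hp⟩),
    fun h y hy => h ▸ ciInf_le hbdd ⟨y, hy⟩⟩

variable {n : ℕ} {C : Set (EuclideanSpace ℝ (Fin n))} {x y p q ξ : EuclideanSpace ℝ (Fin n)}

theorem isProjOn_iff_real_inner_le_zero (hC : Convex ℝ C) :
    IsProjOn C x p ↔ p ∈ C ∧ ∀ y ∈ C, ⟪x - p, y - p⟫ ≤ 0 :=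
  and_congr_right (forall_dist_le_iff_real_inner_le_zero hC)

theorem IsProjOn.unique (hC : Convex ℝ C) (hp : IsProjOn C x p) (hq : IsProjOn C x q) :
    p = q := by
  rw [isProjOn_iff_real_inner_le_zero hC] at hp hq
  have hpq : ⟪q - p, q - p⟫ = ⟪x - p, q - p⟫ + ⟪x - q, p - q⟫ := by
    rw [← neg_sub q p, inner_neg_right, ← sub_eq_add_neg, ← inner_sub_left,
      sub_sub_sub_cancel_left]
  have hnonpos : ⟪q - p, q - p⟫ ≤ 0 := hpq ▸ add_nonpos (hp.2 q hq.1) (hq.2 p hp.1)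
  exact (sub_eq_zero.mp (real_inner_self_nonpos.mp hnonpos)).symm

theorem isProjOn_iff_of_sub_eq_smul (hC : Convex ℝ C) {t : ℝ} (ht : 0 < t)
    (hxy : y - p = t • (x - p)) : IsProjOn C y p ↔ IsProjOn C x p := by
  simp only [isProjOn_iff_real_inner_le_zero hC, hxy, real_inner_smul_left,
    ← smul_eq_mul, smul_nonpos_iff_nonpos_of_pos_left ht]

theorem isProjOn_image_add_right_iff :
    IsProjOn ((· + ξ) '' C) x q ↔ IsProjOn C (x - ξ) (q - ξ) := by
  rw [IsProjOn, IsProjOn, Set.forall_mem_image, Set.image_add_right, Set.mem_preimage,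
    ← sub_eq_add_neg, dist_sub_right]
  refine and_congr_right fun _ => forall₂_congr fun y _ => ?_
  rw [← dist_sub_right x (y + ξ) ξ, add_sub_cancel_right]

theorem stmt_1_general {n : ℕ} (C : Set (EuclideanSpace ℝ (Fin n)))
    (hconv : Convex ℝ C)
    (a : ℝ) (ha : 0 < a) (v pC : EuclideanSpace ℝ (Fin n))
    (hpC : IsProjOn C v pC) :
    ∀ ξ : EuclideanSpace ℝ (Fin n),
      (∃ q, IsProjOn ((· + ξ) '' C) 0 q ∧ (-a) • (ξ + v) = q) ↔
        ξ = -((1 / (1 + a)) • pC + (a / (1 + a)) • v) := by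
  intro ξ
  have ha1 : 0 < 1 + a := by linarith
  have hray : -ξ - ((-a) • (ξ + v) - ξ) = (a / (1 + a)) • (v - ((-a) • (ξ + v) - ξ)) := by
    match_scalars <;> field_simp <;> ring
  rw [exists_eq_right', isProjOn_image_add_right_iff, zero_sub,
    isProjOn_iff_of_sub_eq_smul hconv (div_pos ha ha1) hray]
  constructor
  · intro h
    rw [← h.unique hconv hpC]
    match_scalars <;> field_simp <;> ring
  · rintro rfl
    convert hpC using 1
    match_scalars <;> field_simp <;> ring

theorem stmt_1 {n : ℕ} (C : Set (EuclideanSpace ℝ (Fin n)))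
    (hne : C.Nonempty) (hcl : IsClosed C) (hconv : Convex ℝ C)
    (a : ℝ) (ha : 0 < a) (v pC : EuclideanSpace ℝ (Fin n))
    (hpC : IsProjOn C v pC) :
    ∀ ξ : EuclideanSpace ℝ (Fin n),
      (∃ q, IsProjOn ((· + ξ) '' C) 0 q ∧ (-a) • (ξ + v) = q) ↔
        ξ = -((1 / (1 + a)) • pC + (a / (1 + a)) • v) :=
  stmt_1_general C hconv a ha v pC hpC
end

section
/- Let $t_0 \in \mathbb{R}$, $T > t_0$, $a \ge 0$, and let $g \in L^1([t_0,T],\mathbb{R})$ with $g(t) \ge 0$ almost everywhere. Suppose $h \in C([t_0,T],\mathbb{R})$ satisfies $\frac{1}{2}h^2(t) \le \frac{a^2}{2} + \int_{t_0}^t g(s) h(s)\,ds$ for all $t \in [t_0,T]$. Then $|h(t)| \le a + \int_{t_0}^t g(s)\,ds$ for all $t \in [t_0,T]$. -/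
open MeasureTheory

lemma key_sq (t₀ c : ℝ) (g : ℝ → ℝ) (hg : IntegrableOn g (Set.Ioc t₀ c)) :
    ∫ s in Set.Ioc t₀ c, g s * ∫ u in Set.Ioc t₀ s, g u
      = (∫ s in Set.Ioc t₀ c, g s) ^ 2 / 2 := by
  set μ := volume.restrict (Set.Ioc t₀ c) with hμ
  have hgi : Integrable g μ := hg
  set G : ℝ × ℝ → ℝ := fun p => g p.1 * g p.2 with hGdef
  have hG : Integrable G (μ.prod μ) := hgi.mul_prod hgi
  have hS : MeasurableSet {p : ℝ × ℝ | p.2 ≤ p.1} :=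
    (isClosed_le continuous_snd continuous_fst).measurableSet
  set F : ℝ × ℝ → ℝ := ({p : ℝ × ℝ | p.2 ≤ p.1}).indicator G with hFdef
  have hF : Integrable F (μ.prod μ) := hG.indicator hS
  -- diagonal is null
  have hdiag : (μ.prod μ) {p : ℝ × ℝ | p.1 = p.2} = 0 := by
    have hmeas : MeasurableSet {p : ℝ × ℝ | p.1 = p.2} :=
      (isClosed_eq continuous_fst continuous_snd).measurableSet
    rw [Measure.prod_apply hmeas]
    have : ∀ x : ℝ, μ (Prod.mk x ⁻¹' {p : ℝ × ℝ | p.1 = p.2}) = 0 := by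
      intro x
      have : Prod.mk x ⁻¹' {p : ℝ × ℝ | p.1 = p.2} = {x} := by
        ext y; simp [eq_comm]
      rw [this]
      exact measure_singleton x
    simp [this]
  have hsum : ∀ᵐ p ∂(μ.prod μ), F p + F p.swap = G p := by
    have : ∀ᵐ p ∂(μ.prod μ), p ∉ {p : ℝ × ℝ | p.1 = p.2} := by
      rw [ae_iff]; simpa using hdiag
    filter_upwards [this] with p hp
    replace hp : p.1 ≠ p.2 := hp
    rcases le_or_gt p.2 p.1 with hle | hlt
    · have e1 : F p = G p := Set.indicator_of_mem (show p ∈ {q : ℝ × ℝ | q.2 ≤ q.1} from hle) G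
      have e2 : F p.swap = 0 :=
        Set.indicator_of_notMem
          (show p.swap ∉ {q : ℝ × ℝ | q.2 ≤ q.1} from
            not_le.2 (lt_of_le_of_ne hle (Ne.symm hp))) G
      rw [e1, e2, add_zero]
    · have e1 : F p = 0 := Set.indicator_of_notMem (show p ∉ {q : ℝ × ℝ | q.2 ≤ q.1} from not_le.2 hlt) G
      have e2 : F p.swap = G p.swap := Set.indicator_of_mem (show p.swap ∈ {q : ℝ × ℝ | q.2 ≤ q.1} from le_of_lt hlt) G
      rw [e1, e2, zero_add]
      simp [hGdef, mul_comm]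
  have hswap : ∫ p, F p.swap ∂(μ.prod μ) = ∫ p, F p ∂(μ.prod μ) :=
    integral_prod_swap F
  have htwice : 2 * ∫ p, F p ∂(μ.prod μ) = (∫ s, g s ∂μ) ^ 2 := by
    have hFs : Integrable (fun p => F p.swap) (μ.prod μ) := hF.swap
    calc 2 * ∫ p, F p ∂(μ.prod μ)
        = (∫ p, F p ∂(μ.prod μ)) + ∫ p, F p.swap ∂(μ.prod μ) := by rw [hswap]; ring
      _ = ∫ p, (F p + F p.swap) ∂(μ.prod μ) := (integral_add hF hFs).symm
      _ = ∫ p, G p ∂(μ.prod μ) := integral_congr_ae hsum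
      _ = (∫ s, g s ∂μ) * (∫ s, g s ∂μ) := integral_prod_mul g g
      _ = (∫ s, g s ∂μ) ^ 2 := by ring
  -- compute ∫ F via Fubini
  have hFub : ∫ p, F p ∂(μ.prod μ) = ∫ s, (∫ u, F (s, u) ∂μ) ∂μ := integral_prod F hF
  have hinner : ∀ᵐ s ∂μ, (∫ u, F (s, u) ∂μ) = g s * ∫ u in Set.Ioc t₀ s, g u := by
    filter_upwards [ae_restrict_mem measurableSet_Ioc] with s hs
    have h1 : (fun u => F (s, u)) = (Set.Iic s).indicator (fun u => g s * g u) := by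
      ext u
      simp [hFdef, hGdef, Set.indicator_apply]
    rw [h1, integral_indicator measurableSet_Iic]
    have h2 : μ.restrict (Set.Iic s) = volume.restrict (Set.Ioc t₀ s) := by
      rw [hμ, Measure.restrict_restrict measurableSet_Iic]
      congr 1
      ext x
      simp only [Set.mem_inter_iff, Set.mem_Iic, Set.mem_Ioc]
      constructor
      · rintro ⟨hx, hx2, _⟩; exact ⟨hx2, hx⟩
      · rintro ⟨hx1, hx2⟩; exact ⟨hx2, hx1, hx2.trans hs.2⟩
    rw [h2, integral_const_mul]
  have : ∫ p, F p ∂(μ.prod μ) = ∫ s in Set.Ioc t₀ c, g s * ∫ u in Set.Ioc t₀ s, g u := by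
    rw [hFub]; exact integral_congr_ae hinner
  rw [← this]
  have := htwice
  linarith

theorem stmt_2 (t₀ T a : ℝ) (hT : t₀ < T) (ha : 0 ≤ a) (g h : ℝ → ℝ)
    (hg : IntegrableOn g (Set.Icc t₀ T))
    (hg0 : ∀ᵐ t ∂(volume.restrict (Set.Icc t₀ T)), 0 ≤ g t)
    (hh : ContinuousOn h (Set.Icc t₀ T))
    (hineq : ∀ t ∈ Set.Icc t₀ T,
      (1 / 2) * (h t) ^ 2 ≤ a ^ 2 / 2 + ∫ s in t₀..t, g s * h s) :
    ∀ t ∈ Set.Icc t₀ T, |h t| ≤ a + ∫ s in t₀..t, g s := by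
  intro t₁ ht₁
  obtain ⟨ht₀t₁, ht₁T⟩ := ht₁
  set W : ℝ → ℝ := fun s => ∫ u in Set.Ioc t₀ s, g u with hWdef
  have hWcont : ContinuousOn W (Set.Icc t₀ T) := intervalIntegral.continuousOn_primitive hg
  have hsub1 : Set.Icc t₀ t₁ ⊆ Set.Icc t₀ T := Set.Icc_subset_Icc_right ht₁T
  -- φ and its max
  have hφcont : ContinuousOn (fun s => |h s| - W s) (Set.Icc t₀ t₁) :=
    ((hh.mono hsub1).abs).sub (hWcont.mono hsub1)
  obtain ⟨c, hcmem, hcmax⟩ :=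
    isCompact_Icc.exists_isMaxOn (Set.nonempty_Icc.2 ht₀t₁) hφcont
  set M := |h c| - W c with hMdef
  have hφle : ∀ s ∈ Set.Icc t₀ t₁, |h s| - W s ≤ M := fun s hs => hcmax hs
  have hWt₁ : (∫ s in t₀..t₁, g s) = W t₁ := intervalIntegral.integral_of_le ht₀t₁
  by_cases hMa : M ≤ a
  · have := hφle t₁ (Set.right_mem_Icc.2 ht₀t₁)
    rw [hWt₁]; linarith
  · exfalso
    push_neg at hMa
    have hM0 : 0 < M := lt_of_le_of_lt ha hMa
    have hct₁ : c ∈ Set.Icc t₀ t₁ := hcmem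
    have hcT : c ∈ Set.Icc t₀ T := hsub1 hct₁
    have hc0 : t₀ ≤ c := hct₁.1
    have hsubc : Set.Icc t₀ c ⊆ Set.Icc t₀ T := Set.Icc_subset_Icc_right hcT.2
    have hgc : IntegrableOn g (Set.Icc t₀ c) := hg.mono_set hsubc
    have hgc' : IntegrableOn g (Set.Ioc t₀ c) := hgc.mono_set Set.Ioc_subset_Icc_self
    -- integrabilities
    have hIgh : IntegrableOn (fun s => g s * h s) (Set.Ioc t₀ c) :=
      (hgc.mul_continuousOn (hh.mono hsubc) isCompact_Icc).mono_set Set.Ioc_subset_Icc_self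
    have hIgW : IntegrableOn (fun s => g s * W s) (Set.Ioc t₀ c) :=
      (hgc.mul_continuousOn (hWcont.mono hsubc) isCompact_Icc).mono_set Set.Ioc_subset_Icc_self
    have hIgMW : IntegrableOn (fun s => g s * (M + W s)) (Set.Ioc t₀ c) :=
      (hgc.mul_continuousOn (continuousOn_const.add (hWcont.mono hsubc))
        isCompact_Icc).mono_set Set.Ioc_subset_Icc_self
    -- a.e. nonnegativity of g on Ioc t₀ c
    have hg0c : ∀ᵐ s ∂(volume.restrict (Set.Ioc t₀ c)), 0 ≤ g s :=
      ae_restrict_of_ae_restrict_of_subset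
        (Set.Ioc_subset_Icc_self.trans hsubc) hg0
    -- compare integrals
    have hmono : (∫ s in Set.Ioc t₀ c, g s * h s)
        ≤ ∫ s in Set.Ioc t₀ c, g s * (M + W s) := by
      refine integral_mono_ae hIgh hIgMW ?_
      filter_upwards [hg0c, ae_restrict_mem measurableSet_Ioc] with s hgs hsmem
      have hsmem' : s ∈ Set.Icc t₀ t₁ := ⟨le_of_lt hsmem.1, hsmem.2.trans hct₁.2⟩
      have h1 : h s ≤ M + W s := by
        have := hφle s hsmem'
        have := le_abs_self (h s)
        linarith
      exact mul_le_mul_of_nonneg_left h1 hgs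
    -- compute RHS integral
    have hsplit : (∫ s in Set.Ioc t₀ c, g s * (M + W s))
        = M * W c + (W c) ^ 2 / 2 := by
      have e1 : (∫ s in Set.Ioc t₀ c, g s * (M + W s))
          = (∫ s in Set.Ioc t₀ c, g s * M) + ∫ s in Set.Ioc t₀ c, g s * W s := by
        rw [← integral_add (hgc'.mul_const M) hIgW]
        congr 1; ext s; ring
      have e2 : (∫ s in Set.Ioc t₀ c, g s * M) = M * W c := by
        rw [integral_mul_const]; exact mul_comm _ _
      have e3 : (∫ s in Set.Ioc t₀ c, g s * W s) = (W c) ^ 2 / 2 :=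
        key_sq t₀ c g hgc'
      rw [e1, e2, e3]
    -- combine with hineq at c
    have h1 := hineq c hcT
    rw [intervalIntegral.integral_of_le hc0] at h1
    have habs : |h c| = M + W c := by rw [hMdef]; ring
    have hsq : (h c) ^ 2 = (M + W c) ^ 2 := by rw [← habs, sq_abs]
    have ha2 : a ^ 2 < M ^ 2 := by nlinarith
    have hexp : h c ^ 2 = M ^ 2 + 2 * M * W c + W c ^ 2 := by rw [hsq]; ring
    have hchain : (1 : ℝ) / 2 * h c ^ 2 ≤ a ^ 2 / 2 + (M * W c + W c ^ 2 / 2) := by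
      calc (1 : ℝ) / 2 * h c ^ 2 ≤ a ^ 2 / 2 + ∫ s in Set.Ioc t₀ c, g s * h s := h1
        _ ≤ a ^ 2 / 2 + ∫ s in Set.Ioc t₀ c, g s * (M + W s) := by linarith [hmono]
        _ = a ^ 2 / 2 + (M * W c + W c ^ 2 / 2) := by rw [hsplit]
    clear_value M W
    linarith
end

section
/- Let $t_0 > 0$, $\alpha > 1$, and let $h : [t_0,+\infty) \to \mathbb{R}$ be twice differentiable, continuously differentiable, and bounded below. Suppose $t\,\ddot{h}(t) + \alpha\,\dot{h}(t) \le g(t)$ for almost all $t \in [t_0,+\infty)$, where $g \ge 0$ and $g \in L^1([t_0,+\infty))$. Then $\lim_{t\to+\infty} h(t)$ exists (in $\mathbb{R}$). -/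
/-!
Multiplying by the integrating factor `t ^ (α - 1)` turns the hypothesis into
`(t ^ α * h')' ≤ t ^ (α - 1) * g`, whence
`h' T ≤ T ^ (-α) * (t₀ ^ α * h' t₀ + ∫ s in t₀..T, s ^ (α - 1) * g s)`.
For `α > 1` the right-hand side is integrable on `[t₀, ∞)`: by Tonelli its second part has
integral at most `(α - 1)⁻¹ * ∫ |g|`, since `∫ t in Ioi s, t ^ (-α) = s ^ (1 - α) / (α - 1)`.
So the positive part of `h'` is integrable, `h - ∫ (h')⁺` is nonincreasing and bounded below,
and `h` converges.
-/

open MeasureTheory Filter Set Topology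
open scoped ENNReal

theorem sub_le_integral_of_hasDeriv_right_of_ae_le {f f' φ : ℝ → ℝ} {a b : ℝ} (hab : a ≤ b)
    (hcont : ContinuousOn f (Icc a b)) (hderiv : ∀ x ∈ Ioo a b, HasDerivWithinAt f (f' x) (Ioi x) x)
    (hφ : IntegrableOn φ (Icc a b)) (hle : ∀ᵐ x ∂volume.restrict (Icc a b), f' x ≤ φ x) :
    f b - f a ≤ ∫ x in a..b, φ x := by
  -- raising `φ` to `max φ f'` on a null set makes the bound hold everywhere
  have hψ : (fun x => max (φ x) (f' x)) =ᵐ[volume.restrict (Icc a b)] φ := by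
    filter_upwards [hle] with x hx using max_eq_left hx
  calc f b - f a ≤ ∫ x in a..b, max (φ x) (f' x) :=
        intervalIntegral.sub_le_integral_of_hasDeriv_right_of_le hab hcont hderiv
          (hφ.congr_fun_ae hψ.symm) fun x _ => le_max_right _ _
    _ = ∫ x in a..b, φ x := by
        rw [intervalIntegral.integral_of_le hab, intervalIntegral.integral_of_le hab]
        exact integral_congr_ae (ae_restrict_of_ae_restrict_of_subset Ioc_subset_Icc_self hψ)

theorem le_rpow_neg_mul_of_mul_deriv_add_le {y y' g : ℝ → ℝ} {a α T : ℝ} (ha : 0 < a)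
    (haT : a ≤ T) (hy : ∀ t ∈ Icc a T, HasDerivAt y (y' t) t) (hg : IntegrableOn g (Icc a T))
    (hle : ∀ᵐ t ∂volume.restrict (Icc a T), t * y' t + α * y t ≤ g t) :
    y T ≤ T ^ (-α) * (a ^ α * y a + ∫ s in a..T, s ^ (α - 1) * g s) := by
  have hpos : ∀ t ∈ Icc a T, 0 < t := fun t ht => ha.trans_le ht.1
  have hderiv : ∀ t ∈ Icc a T,
      HasDerivAt (fun t => t ^ α * y t) (t ^ (α - 1) * (t * y' t + α * y t)) t := by
    intro t ht
    refine ((Real.hasDerivAt_rpow_const (Or.inl (hpos t ht).ne')).mul (hy t ht)).congr_deriv ?_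
    have ht0 : t ≠ 0 := (hpos t ht).ne'
    rw [Real.rpow_sub_one ht0]
    field_simp
    ring
  have hφ : IntegrableOn (fun s => s ^ (α - 1) * g s) (Icc a T) :=
    hg.continuousOn_mul (fun t ht =>
      (Real.continuousAt_rpow_const _ _ (Or.inl (hpos t ht).ne')).continuousWithinAt) isCompact_Icc
  have hint := sub_le_integral_of_hasDeriv_right_of_ae_le haT
    (fun t ht => (hderiv t ht).continuousAt.continuousWithinAt)
    (fun t ht => (hderiv t (Ioo_subset_Icc_self ht)).hasDerivWithinAt) hφ
    (by filter_upwards [hle, ae_restrict_mem measurableSet_Icc] with t h ht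
        exact mul_le_mul_of_nonneg_left h (Real.rpow_nonneg (hpos t ht).le _))
  rw [Real.rpow_neg (hpos T ⟨haT, le_rfl⟩).le, ← div_eq_inv_mul,
    le_div_iff₀ (Real.rpow_pos_of_pos (hpos T ⟨haT, le_rfl⟩) _)]
  linarith

theorem lintegral_Ioi_rpow_neg {s α : ℝ} (hs : 0 < s) (hα : 1 < α) :
    ∫⁻ t in Ioi s, ENNReal.ofReal (t ^ (-α)) = ENNReal.ofReal (s ^ (1 - α) / (α - 1)) := by
  rw [← ofReal_integral_eq_lintegral_ofReal (integrableOn_Ioi_rpow_of_lt (by linarith) hs)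
      ((ae_restrict_mem measurableSet_Ioi).mono fun t ht => Real.rpow_nonneg (hs.trans ht).le _),
    integral_Ioi_rpow_of_lt (by linarith) hs, show -α + 1 = 1 - α by ring, neg_div, ← div_neg,
    neg_sub]

theorem lintegral_Ioi_rpow_neg_mul_lintegral_Ioc {a α : ℝ} (ha : 0 ≤ a) (hα : 1 < α)
    {f : ℝ → ℝ≥0∞} (hf : AEMeasurable f (volume.restrict (Ioi a))) :
    ∫⁻ t in Ioi a, ENNReal.ofReal (t ^ (-α)) * ∫⁻ s in Ioc a t, ENNReal.ofReal (s ^ (α - 1)) * f s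
      = ENNReal.ofReal (α - 1)⁻¹ * ∫⁻ s in Ioi a, f s := by
  set μ := volume.restrict (Ioi a)
  set F : ℝ → ℝ≥0∞ := fun s => ENNReal.ofReal (s ^ (α - 1)) * f s
  set K : ℝ → ℝ → ℝ≥0∞ := fun t s => ENNReal.ofReal (t ^ (-α)) * (Iic t).indicator F s
  have hK : AEMeasurable (Function.uncurry K) (μ.prod μ) := by
    have hF : AEMeasurable F μ := by unfold F; fun_prop
    exact (Measurable.ennreal_ofReal (by fun_prop)).aemeasurable.mul
      (hF.comp_snd.indicator (measurableSet_le measurable_snd measurable_fst))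
  have hinner : ∀ t, ∫⁻ s in Ioc a t, F s = ∫⁻ s, (Iic t).indicator F s ∂μ := fun t => by
    rw [lintegral_indicator measurableSet_Iic, Measure.restrict_restrict measurableSet_Iic,
      Iic_inter_Ioi]
  have houter : ∀ s ∈ Ioi a, ∫⁻ t, K t s ∂μ = ENNReal.ofReal (α - 1)⁻¹ * f s := by
    intro s hs
    have hs0 : 0 < s := ha.trans_lt hs
    calc ∫⁻ t, K t s ∂μ
        = ∫⁻ t, (Ici s).indicator (fun t => ENNReal.ofReal (t ^ (-α))) t * F s ∂μ := by
          congr 1; ext t; by_cases hst : s ≤ t <;> simp [K, hst, indicator]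
      _ = (∫⁻ t in Ioi s, ENNReal.ofReal (t ^ (-α))) * F s := by
          rw [lintegral_mul_const _
              ((Measurable.ennreal_ofReal (by fun_prop)).indicator measurableSet_Ici),
            lintegral_indicator measurableSet_Ici, Measure.restrict_restrict measurableSet_Ici,
            inter_eq_left.2 (Ici_subset_Ioi.2 hs), restrict_Ioi_eq_restrict_Ici]
      _ = ENNReal.ofReal (s ^ (1 - α) / (α - 1)) * (ENNReal.ofReal (s ^ (α - 1)) * f s) := by
          rw [lintegral_Ioi_rpow_neg hs0 hα]
      _ = ENNReal.ofReal (α - 1)⁻¹ * f s := by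
          rw [← mul_assoc,
            ← ENNReal.ofReal_mul (div_nonneg (Real.rpow_nonneg hs0.le _) (by linarith))]
          congr 2
          rw [div_mul_eq_mul_div, ← Real.rpow_add hs0]
          simp
  calc _ = ∫⁻ t, ∫⁻ s, K t s ∂μ ∂μ := by
        congr 1; ext t; rw [hinner, ← lintegral_const_mul' _ _ ENNReal.ofReal_ne_top]
    _ = ∫⁻ s, ∫⁻ t, K t s ∂μ ∂μ := lintegral_lintegral_swap hK
    _ = ∫⁻ s, ENNReal.ofReal (α - 1)⁻¹ * f s ∂μ := setLIntegral_congr_fun measurableSet_Ioi houter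
    _ = _ := lintegral_const_mul' _ _ ENNReal.ofReal_ne_top

theorem integrableOn_max_zero_of_le_rpow_neg_mul {u g : ℝ → ℝ} {a α C : ℝ} (ha : 0 < a)
    (hα : 1 < α) (hu : AEStronglyMeasurable u (volume.restrict (Ioi a)))
    (hg : IntegrableOn g (Ioi a))
    (hle : ∀ t ∈ Ioi a, u t ≤ t ^ (-α) * (C + ∫ s in a..t, s ^ (α - 1) * g s)) :
    IntegrableOn (fun t => max (u t) 0) (Ioi a) := by
  refine ⟨hu.sup aestronglyMeasurable_const, ?_⟩
  rw [hasFiniteIntegral_iff_ofReal (ae_of_all _ fun t => le_max_right (u t) 0)]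
  simp only [ENNReal.ofReal_max, ENNReal.ofReal_zero, zero_le, max_eq_left]
  set I : ℝ → ℝ≥0∞ := fun t => ∫⁻ s in Ioc a t, ENNReal.ofReal (s ^ (α - 1)) * ‖g s‖ₑ
  have hpt : ∀ t ∈ Ioi a,
      ENNReal.ofReal (u t) ≤ ‖t ^ (-α) * C‖ₑ + ENNReal.ofReal (t ^ (-α)) * I t := by
    intro t ht
    have hI : ENNReal.ofReal (∫ s in a..t, s ^ (α - 1) * g s) ≤ I t := by
      rw [intervalIntegral.integral_of_le (le_of_lt ht)]
      refine (Real.ofReal_le_enorm _).trans ((enorm_integral_le_lintegral_enorm _).trans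
        (setLIntegral_mono' measurableSet_Ioc fun s hs => ?_))
      rw [enorm_mul, Real.enorm_of_nonneg (Real.rpow_nonneg (ha.trans hs.1).le _)]
    calc ENNReal.ofReal (u t)
        ≤ ENNReal.ofReal (t ^ (-α) * C + t ^ (-α) * ∫ s in a..t, s ^ (α - 1) * g s) :=
          ENNReal.ofReal_le_ofReal ((hle t ht).trans_eq (mul_add _ _ _))
      _ ≤ _ := ENNReal.ofReal_add_le
      _ ≤ _ := by
          gcongr ?_ + ?_
          · exact Real.ofReal_le_enorm _
          · rw [ENNReal.ofReal_mul (Real.rpow_nonneg (ha.trans ht).le _)]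
            gcongr
  have hC : IntegrableOn (fun t => t ^ (-α) * C) (Ioi a) :=
    (integrableOn_Ioi_rpow_of_lt (by linarith) ha).mul_const C
  calc ∫⁻ t in Ioi a, ENNReal.ofReal (u t)
      ≤ ∫⁻ t in Ioi a, ‖t ^ (-α) * C‖ₑ + ENNReal.ofReal (t ^ (-α)) * I t :=
        setLIntegral_mono' measurableSet_Ioi hpt
    _ = (∫⁻ t in Ioi a, ‖t ^ (-α) * C‖ₑ)
          + ENNReal.ofReal (α - 1)⁻¹ * ∫⁻ s in Ioi a, ‖g s‖ₑ := by
        rw [lintegral_add_left' hC.1.enorm,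
          lintegral_Ioi_rpow_neg_mul_lintegral_Ioc ha.le hα hg.1.enorm]
    _ < ⊤ := ENNReal.add_lt_top.2 ⟨hC.2, ENNReal.mul_lt_top ENNReal.ofReal_lt_top hg.2⟩

theorem exists_tendsto_of_hasDerivAt_le_of_integrableOn {f f' φ : ℝ → ℝ} {a m : ℝ}
    (hf : ∀ t ∈ Ici a, HasDerivAt f (f' t) t) (hφ : IntegrableOn φ (Ioi a))
    (hf'φ : ∀ᵐ t ∂volume.restrict (Ioi a), f' t ≤ φ t) (hm : ∀ t ∈ Ici a, m ≤ f t) :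
    ∃ L, Tendsto f atTop (𝓝 L) := by
  have hφ_Ici : IntegrableOn φ (Ici a) := by rwa [IntegrableOn, ← restrict_Ioi_eq_restrict_Ici]
  rw [restrict_Ioi_eq_restrict_Ici] at hf'φ
  set b : ℝ → ℝ := fun t => max a t
  have hab : ∀ t, a ≤ b t := le_max_left a
  have hφ_interval : ∀ x y, a ≤ x → a ≤ y → IntervalIntegrable φ volume x y := fun x y hx hy =>
    (hφ_Ici.mono_set fun t ht => (le_min hx hy).trans ht.1).intervalIntegrable
  have hI : Tendsto (fun t => ∫ s in a..b t, φ s) atTop (𝓝 (∫ s in Ioi a, φ s)) :=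
    intervalIntegral_tendsto_integral_Ioi a hφ
      (tendsto_atTop_mono (le_max_right a) tendsto_id)
  set F : ℝ → ℝ := fun t => f (b t) - ∫ s in a..b t, φ s
  have hF : Antitone F := by
    intro x y hxy
    have hbxy : b x ≤ b y := max_le_max_left a hxy
    have hIcc : Icc (b x) (b y) ⊆ Ici a := fun t ht => (hab x).trans ht.1
    have hdiff : f (b y) - f (b x) ≤ ∫ s in b x..b y, φ s :=
      sub_le_integral_of_hasDeriv_right_of_ae_le hbxy
        (fun t ht => (hf t (hIcc ht)).continuousAt.continuousWithinAt)
        (fun t ht => (hf t (hIcc (Ioo_subset_Icc_self ht))).hasDerivWithinAt)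
        (hφ_Ici.mono_set hIcc) (ae_restrict_of_ae_restrict_of_subset hIcc hf'φ)
    have hadd := intervalIntegral.integral_add_adjacent_intervals
      (hφ_interval a (b x) le_rfl (hab x))
      (hφ_interval (b x) (b y) (hab x) (hab y))
    simp only [F]
    linarith
  have hfb : ∀ t, f (b t) = F t + ∫ s in a..b t, φ s := fun t => by simp only [F]; ring
  obtain hbot | ⟨L, hL⟩ := tendsto_atTop_of_antitone hF
  · obtain ⟨t, ht⟩ := ((hbot.atBot_add hI).eventually (eventually_lt_atBot m)).exists
    exact absurd (hm (b t) (hab t)) (by rw [hfb]; linarith)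
  · refine ⟨L + ∫ s in Ioi a, φ s, (hL.add hI).congr' ?_⟩
    filter_upwards [eventually_ge_atTop a] with t ht
    rw [← hfb]
    simp only [b, max_eq_right ht]

theorem stmt_16_general (t₀ α : ℝ) (ht₀ : 0 < t₀) (hα : 1 < α)
    (h h' h'' g : ℝ → ℝ)
    (hd1 : ∀ t ∈ Set.Ici t₀, HasDerivAt h (h' t) t)
    (hd2 : ∀ t ∈ Set.Ici t₀, HasDerivAt h' (h'' t) t)
    (hbelow : ∃ m : ℝ, ∀ t ∈ Set.Ici t₀, m ≤ h t)
    (hgint : IntegrableOn g (Set.Ici t₀))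
    (hineq : ∀ᵐ t ∂(volume.restrict (Set.Ici t₀)),
      t * h'' t + α * h' t ≤ g t) :
    ∃ L : ℝ, Tendsto h atTop (nhds L) := by
  obtain ⟨m, hm⟩ := hbelow
  have hh' : ∀ T ∈ Ioi t₀,
      h' T ≤ T ^ (-α) * (t₀ ^ α * h' t₀ + ∫ s in t₀..T, s ^ (α - 1) * g s) :=
    fun T hT => le_rpow_neg_mul_of_mul_deriv_add_le ht₀ hT.le (fun t ht => hd2 t ht.1)
      (hgint.mono_set Icc_subset_Ici_self)
      (ae_restrict_of_ae_restrict_of_subset Icc_subset_Ici_self hineq)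
  have hh'_meas : AEStronglyMeasurable h' (volume.restrict (Ioi t₀)) :=
    ContinuousOn.aestronglyMeasurable
      (fun t ht => (hd2 t (Ioi_subset_Ici_self ht)).continuousAt.continuousWithinAt)
      measurableSet_Ioi
  have hh'_pos : IntegrableOn (fun t => max (h' t) 0) (Ioi t₀) :=
    integrableOn_max_zero_of_le_rpow_neg_mul ht₀ hα hh'_meas
      (hgint.mono_set Ioi_subset_Ici_self) hh'
  exact exists_tendsto_of_hasDerivAt_le_of_integrableOn hd1 hh'_pos
    (ae_of_all _ fun t => le_max_left _ _) hm

theorem stmt_16 (t₀ α : ℝ) (ht₀ : 0 < t₀) (hα : 1 < α)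
    (h h' h'' g : ℝ → ℝ)
    (hd1 : ∀ t ∈ Set.Ici t₀, HasDerivAt h (h' t) t)
    (hd2 : ∀ t ∈ Set.Ici t₀, HasDerivAt h' (h'' t) t)
    (hC1 : ContinuousOn h' (Set.Ici t₀))
    (hbelow : ∃ m : ℝ, ∀ t ∈ Set.Ici t₀, m ≤ h t)
    (hg0 : ∀ᵐ t ∂(volume.restrict (Set.Ici t₀)), 0 ≤ g t)
    (hgint : IntegrableOn g (Set.Ici t₀))
    (hineq : ∀ᵐ t ∂(volume.restrict (Set.Ici t₀)),
      t * h'' t + α * h' t ≤ g t) :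
    ∃ L : ℝ, Tendsto h atTop (nhds L) :=
  stmt_16_general t₀ α ht₀ hα h h' h'' g hd1 hd2 hbelow hgint hineq
end
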